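/- Partial integrals of the quantile function. Let Y be a real random variable on a probability space (Ω, 𝒜, P) with E|Y| < ∞, cdf F(y) = P(Y ≤ y), and quantile function Q(p) = inf{y ∈ ℝ : F(y) ≥ p}. Then for every a ∈ (0,1): ∫₀^a Q(u) du = E[Y·1{Y ≤ Q(a)}] − Q(a)·(F(Q(a)) − a) and ∫_a^1 Q(u) du = E[Y·1{Y > Q(a)}] + Q(a)·(F(Q(a)) − a). In particular, if P(Y = Q(a)) = 0, then ∫₀^a Q(u) du = E[Y·1{Y ≤ Q(a)}] and ∫_a^1 Q(u) du = E[Y·1{Y > Q(a)}], with F(Q(a)) = a. -/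

import Mathlib

/-! The quantile function `Q` is monotone on `(0,1)` and satisfies `Q u ≤ y ↔ u ≤ F y` there, so it
pushes Lebesgue measure on `(0,1)` forward to the law of `Y`; hence `∫₀^{F y} Q = E[Y·1{Y ≤ y}]`.
For `y = Q a`, the excess `∫ₐ^{F(Q a)} Q` is `Q a · (F(Q a) − a)`, because `Q` is constant on
`[a, F(Q a))`. The upper integral is the mean of `Y` minus the lower one. Without an atom at `Q a`
the cdf is left continuous there, and `F y < a` for `y < Q a` forces `F(Q a) = a`. -/

open MeasureTheory ProbabilityTheory Set Filter Function Topology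

lemma setIntegral_Ioo_eq_Ioo_add_Ico {E : Type*} [NormedAddCommGroup E] [NormedSpace ℝ E]
    {ν : Measure ℝ} {f : ℝ → E} {a b c : ℝ} (hab : a < b) (hbc : b ≤ c)
    (hf : IntegrableOn f (Ioo a c) ν) :
    ∫ x in Ioo a c, f x ∂ν = ∫ x in Ioo a b, f x ∂ν + ∫ x in Ico b c, f x ∂ν := by
  have hsplit : Ioo a b ∪ Ico b c = Ioo a c := Ioo_union_Ico_eq_Ioo hab hbc
  rw [← hsplit] at hf ⊢
  exact setIntegral_union (Ico_disjoint_Ico_same.mono_left Ioo_subset_Ico_self) measurableSet_Ico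
    (hf.mono_set subset_union_left) (hf.mono_set subset_union_right)

namespace ProbabilityTheory

-- Junk value `0` for `p ≤ 0` (the set is all of `ℝ`) and for `p > 1` (the set is empty).
noncomputable def quantile (μ : Measure ℝ) (p : ℝ) : ℝ := sInf {y | p ≤ cdf μ y}

variable {μ : Measure ℝ} {p y : ℝ}

lemma nonempty_setOf_le_cdf (hp : p < 1) : {y | p ≤ cdf μ y}.Nonempty :=
  ((tendsto_cdf_atTop μ).eventually (eventually_ge_nhds hp)).exists

lemma bddBelow_setOf_le_cdf (hp : 0 < p) : BddBelow {y | p ≤ cdf μ y} := by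
  obtain ⟨y₀, hy₀⟩ := ((tendsto_cdf_atBot μ).eventually (eventually_lt_nhds hp)).exists
  exact ⟨y₀, fun z hz => le_of_not_gt fun hzy => (hz.trans (monotone_cdf μ hzy.le)).not_gt hy₀⟩

lemma le_cdf_quantile (hp : p ∈ Ioo 0 1) : p ≤ cdf μ (quantile μ p) := by
  have hright : ∀ᶠ z in 𝓝[>] (quantile μ p), p ≤ cdf μ z := by
    filter_upwards [self_mem_nhdsWithin] with z hz
    obtain ⟨w, hw, hwz⟩ := exists_lt_of_csInf_lt (nonempty_setOf_le_cdf hp.2) hz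
    exact hw.trans (monotone_cdf μ hwz.le)
  exact ge_of_tendsto (((cdf μ).right_continuous _).mono Ioi_subset_Ici_self).tendsto hright

lemma quantile_le_iff (hp : p ∈ Ioo 0 1) : quantile μ p ≤ y ↔ p ≤ cdf μ y :=
  ⟨fun h => (le_cdf_quantile hp).trans (monotone_cdf μ h), csInf_le (bddBelow_setOf_le_cdf hp.1)⟩

lemma monotoneOn_quantile : MonotoneOn (quantile μ) (Ioo 0 1) := fun _ hu _ hv huv =>
  (quantile_le_iff hu).2 (huv.trans (le_cdf_quantile hv))

lemma cdf_lt_of_lt_quantile (hp : p ∈ Ioo 0 1) (hy : y < quantile μ p) : cdf μ y < p :=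
  lt_of_not_ge fun h => hy.not_ge ((quantile_le_iff hp).2 h)

lemma quantile_preimage_Iic_inter_Ioo :
    (quantile μ ⁻¹' Iic y ∩ Ioo 0 1 : Set ℝ) =ᵐ[volume] Ioo 0 (cdf μ y) := by
  have hset : quantile μ ⁻¹' Iic y ∩ Ioo 0 1 = Iic (cdf μ y) ∩ Ioo 0 1 := by
    ext u
    simp only [mem_inter_iff, mem_preimage, mem_Iic]
    exact and_congr_left quantile_le_iff
  have hIoo : Ioo 0 (cdf μ y) = Iio (cdf μ y) ∩ Ioo 0 1 := by
    rw [Iio_inter_Ioo, min_eq_left (cdf_le_one μ y)]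
  rw [hset, hIoo]
  exact (Iio_ae_eq_Iic (μ := volume)).symm.inter ae_eq_rfl

lemma aemeasurable_quantile : AEMeasurable (quantile μ) (volume.restrict (Ioo 0 1)) :=
  aemeasurable_restrict_of_monotoneOn measurableSet_Ioo monotoneOn_quantile

lemma quantile_eq_of_mem_Ico {a u : ℝ} (ha : a ∈ Ioo 0 1)
    (hu : u ∈ Ico a (cdf μ (quantile μ a))) : quantile μ u = quantile μ a := by
  have hu' : u ∈ Ioo 0 1 := ⟨ha.1.trans_le hu.1, hu.2.trans_le (cdf_le_one μ _)⟩
  exact le_antisymm ((quantile_le_iff hu').2 hu.2.le) (monotoneOn_quantile ha hu' hu.1)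

variable [IsProbabilityMeasure μ]

lemma map_quantile_volume : (volume.restrict (Ioo 0 1)).map (quantile μ) = μ := by
  refine Measure.ext_of_Iic _ _ fun y => ?_
  rw [Measure.map_apply_of_aemeasurable aemeasurable_quantile measurableSet_Iic,
    Measure.restrict_apply' measurableSet_Ioo, measure_congr quantile_preimage_Iic_inter_Ioo,
    Real.volume_Ioo, sub_zero, ofReal_cdf]

lemma setIntegral_quantile_Ioo_zero_one : ∫ u in Ioo 0 1, quantile μ u = ∫ x, x ∂μ := by
  conv_rhs => rw [← map_quantile_volume (μ := μ)]
  exact (integral_map aemeasurable_quantile aestronglyMeasurable_id).symm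

lemma setIntegral_quantile_Ioo_zero_cdf (y : ℝ) :
    ∫ u in Ioo 0 (cdf μ y), quantile μ u = ∫ x in Iic y, x ∂μ := by
  conv_rhs => rw [← map_quantile_volume (μ := μ)]
  rw [setIntegral_map measurableSet_Iic measurable_id'.aestronglyMeasurable aemeasurable_quantile,
    Measure.restrict_restrict' measurableSet_Ioo,
    setIntegral_congr_set quantile_preimage_Iic_inter_Ioo]

lemma cdf_quantile_of_measure_singleton_eq_zero {a : ℝ} (ha : a ∈ Ioo 0 1)
    (h : μ {quantile μ a} = 0) : cdf μ (quantile μ a) = a := by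
  refine le_antisymm ?_ (le_cdf_quantile ha)
  have hleft : leftLim (cdf μ) (quantile μ a) ≤ a :=
    le_of_tendsto ((cdf μ).mono.tendsto_leftLim _) <| eventually_nhdsWithin_of_forall
      fun y hy => (cdf_lt_of_lt_quantile ha hy).le
  have hjump : cdf μ (quantile μ a) - leftLim (cdf μ) (quantile μ a) ≤ 0 := by
    have hatom := (cdf μ).measure_singleton (quantile μ a)
    rwa [measure_cdf, h, eq_comm, ENNReal.ofReal_eq_zero] at hatom
  linarith

variable (hμ : Integrable id μ)
include hμ

lemma integrableOn_quantile : IntegrableOn (quantile μ) (Ioo 0 1) := by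
  rw [← map_quantile_volume (μ := μ)] at hμ
  exact (integrable_map_measure aestronglyMeasurable_id aemeasurable_quantile).1 hμ

lemma setIntegral_quantile_Ioo_zero {a : ℝ} (ha : a ∈ Ioo 0 1) :
    ∫ u in Ioo 0 a, quantile μ u
      = ∫ x in Iic (quantile μ a), x ∂μ - quantile μ a * (cdf μ (quantile μ a) - a) := by
  set q := quantile μ a
  have hab : a ≤ cdf μ q := le_cdf_quantile ha
  have hint : IntegrableOn (quantile μ) (Ioo 0 (cdf μ q)) :=
    (integrableOn_quantile hμ).mono_set (Ioo_subset_Ioo_right (cdf_le_one μ q))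
  have hflat : ∫ u in Ico a (cdf μ q), quantile μ u = (cdf μ q - a) * q := by
    rw [setIntegral_congr_fun measurableSet_Ico fun u hu => quantile_eq_of_mem_Ico ha hu,
      setIntegral_const, Real.volume_real_Ico_of_le hab, smul_eq_mul]
  rw [← setIntegral_quantile_Ioo_zero_cdf, setIntegral_Ioo_eq_Ioo_add_Ico ha.1 hab hint, hflat]
  ring

lemma setIntegral_quantile_Ioo_one {a : ℝ} (ha : a ∈ Ioo 0 1) :
    ∫ u in Ioo a 1, quantile μ u
      = ∫ x in Ioi (quantile μ a), x ∂μ + quantile μ a * (cdf μ (quantile μ a) - a) := by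
  have htotal := setIntegral_quantile_Ioo_zero_one (μ := μ)
  rw [setIntegral_Ioo_eq_Ioo_add_Ico ha.1 ha.2.le (integrableOn_quantile hμ),
    integral_Ico_eq_integral_Ioo, setIntegral_quantile_Ioo_zero hμ ha,
    ← integral_add_compl (f := fun x => x) measurableSet_Iic hμ, compl_Iic] at htotal
  linarith

end ProbabilityTheory

/-- **Partial integrals of the quantile function.**
Let `Y` be an integrable real random variable with cdf `F` and quantile function `Q`. For
every `a ∈ (0,1)`:
`∫₀ᵃ Q(u) du = E[Y·1{Y ≤ Q(a)}] − Q(a)·(F(Q(a)) − a)` and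
`∫ₐ¹ Q(u) du = E[Y·1{Y > Q(a)}] + Q(a)·(F(Q(a)) − a)`.
If `P(Y = Q(a)) = 0`, then `F(Q(a)) = a` and the correction terms vanish. -/
theorem quantile_partial_integrals
    {Ω : Type*} [MeasurableSpace Ω] (P : Measure Ω) [IsProbabilityMeasure P]
    (Y : Ω → ℝ) (hYmeas : Measurable Y) (hYint : Integrable Y P)
    (F : ℝ → ℝ) (hF : ∀ y, F y = (P {ω | Y ω ≤ y}).toReal)
    (Q : ℝ → ℝ) (hQ : ∀ p : ℝ, Q p = sInf {y : ℝ | p ≤ F y})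
    (a : ℝ) (ha : a ∈ Set.Ioo (0:ℝ) 1) :
    (∫ u in Set.Ioo (0:ℝ) a, Q u)
      = (∫ ω in {ω | Y ω ≤ Q a}, Y ω ∂P) - Q a * (F (Q a) - a) ∧
    (∫ u in Set.Ioo a (1:ℝ), Q u)
      = (∫ ω in {ω | Q a < Y ω}, Y ω ∂P) + Q a * (F (Q a) - a) ∧
    (P {ω | Y ω = Q a} = 0 →
      F (Q a) = a ∧
      (∫ u in Set.Ioo (0:ℝ) a, Q u) = (∫ ω in {ω | Y ω ≤ Q a}, Y ω ∂P) ∧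
      (∫ u in Set.Ioo a (1:ℝ), Q u) = (∫ ω in {ω | Q a < Y ω}, Y ω ∂P)) := by
  set μ := P.map Y
  have : IsProbabilityMeasure μ := Measure.isProbabilityMeasure_map hYmeas.aemeasurable
  obtain rfl : F = cdf μ := funext fun y => by
    rw [hF, cdf_eq_real, measureReal_def, Measure.map_apply hYmeas measurableSet_Iic]; rfl
  obtain rfl : Q = quantile μ := funext hQ
  have hμ : Integrable id μ :=
    (integrable_map_measure aestronglyMeasurable_id hYmeas.aemeasurable).2 hYint
  have hpull {s : Set ℝ} (hs : MeasurableSet s) : ∫ x in s, x ∂μ = ∫ ω in Y ⁻¹' s, Y ω ∂P :=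
    setIntegral_map hs measurable_id'.aestronglyMeasurable hYmeas.aemeasurable
  have hlower := setIntegral_quantile_Ioo_zero hμ ha
  have hupper := setIntegral_quantile_Ioo_one hμ ha
  rw [hpull measurableSet_Iic] at hlower
  rw [hpull measurableSet_Ioi] at hupper
  refine ⟨hlower, hupper, fun hatom => ?_⟩
  have hcdf : cdf μ (quantile μ a) = a := cdf_quantile_of_measure_singleton_eq_zero ha <| by
    rwa [Measure.map_apply hYmeas (measurableSet_singleton _)]
  rw [hcdf, sub_self, mul_zero, sub_zero] at hlower
  rw [hcdf, sub_self, mul_zero, add_zero] at hupper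
  exact ⟨hcdf, hlower, hupper⟩
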